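/- For norms χ, χ' on a finite-dimensional vector space V and any p ∈ [1,∞), the p-distance satisfies the Pythagorean identity d_p(χ,χ')^p = d_p(χ, χ∧χ')^p + d_p(χ∧χ', χ')^p, where χ∧χ' is the pointwise minimum norm. -/

import Mathlib

open scoped ENNReal

noncomputable section
attribute [local instance] Classical.propDecidable

/-- An additive non-Archimedean norm on a vector space over a trivially valued field:
`χ : V → ℝ ∪ {+∞}` with `χ v = +∞` iff `v = 0`, invariance under nonzero scalars, and
the ultrametric inequality `χ(v+w) ≥ min (χ v) (χ w)`. -/
structure NAnorm (k V : Type*) [Field k] [AddCommGroup V] [Module k V] where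
  toFun : V → EReal
  ne_bot : ∀ v, toFun v ≠ ⊥
  top_iff : ∀ v, toFun v = ⊤ ↔ v = 0
  smul_eq : ∀ (a : k) (v : V), a ≠ 0 → toFun (a • v) = toFun v
  ultra : ∀ v w, min (toFun v) (toFun w) ≤ toFun (v + w)

namespace NAnorm

variable {k V : Type*} [Field k] [AddCommGroup V] [Module k V]

/-- A basis is `χ`-orthogonal if the norm of any linear combination is the minimum of the
norms of the basis vectors appearing with a nonzero coefficient. -/
def IsOrthogonal {N : ℕ} (χ : NAnorm k V) (b : Module.Basis (Fin N) k V) : Prop :=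
  ∀ a : Fin N → k, χ.toFun (∑ i, a i • b i) = ⨅ i ∈ {i | a i ≠ 0}, χ.toFun (b i)

/-- The real value of the norm (finite on nonzero vectors). -/
noncomputable def val (χ : NAnorm k V) (v : V) : ℝ := (χ.toFun v).toReal

/-- The pointwise minimum of two norms. -/
noncomputable def inf (χ χ' : NAnorm k V) : NAnorm k V where
  toFun v := min (χ.toFun v) (χ'.toFun v)
  ne_bot v h := by
    rcases min_cases (χ.toFun v) (χ'.toFun v) with ⟨h1, _⟩ | ⟨h1, _⟩
    · exact χ.ne_bot v (by rw [← h1]; exact h)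
    · exact χ'.ne_bot v (by rw [← h1]; exact h)
  top_iff v := by
    constructor
    · intro h
      have h1 : (⊤ : EReal) ≤ χ.toFun v := by rw [← h]; exact min_le_left _ _
      exact (χ.top_iff v).1 (le_antisymm le_top h1)
    · intro h
      show min (χ.toFun v) (χ'.toFun v) = ⊤
      rw [(χ.top_iff v).2 h, (χ'.top_iff v).2 h, min_self]
  smul_eq a v ha := by
    show min (χ.toFun (a • v)) (χ'.toFun (a • v)) = min (χ.toFun v) (χ'.toFun v)
    rw [χ.smul_eq a v ha, χ'.smul_eq a v ha]
  ultra v w := by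
    refine le_min ?_ ?_
    · exact le_trans (min_le_min (min_le_left _ _) (min_le_left _ _)) (χ.ultra v w)
    · exact le_trans (min_le_min (min_le_right _ _) (min_le_right _ _)) (χ'.ultra v w)

/-- The Goldman–Iwahori distance `d_∞(χ,χ') = sup_{v ≠ 0} |χ(v) - χ'(v)|`. -/
noncomputable def dInfty (χ χ' : NAnorm k V) : ℝ≥0∞ :=
  ⨆ v : {v : V // v ≠ 0}, ENNReal.ofReal |χ.val v.1 - χ'.val v.1|

/-- The distance `d_p(χ,χ')`, computed from the relative spectrum of `χ,χ'` in a joint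
orthogonal basis. -/
noncomputable def dp (p : ℝ) (χ χ' : NAnorm k V) : ℝ :=
  if h : ∃ b : Module.Basis (Fin (Module.finrank k V)) k V, χ.IsOrthogonal b ∧ χ'.IsOrthogonal b then
    ((Module.finrank k V : ℝ)⁻¹ *
      ∑ j, |χ.val (h.choose j) - χ'.val (h.choose j)| ^ p) ^ (1 / p)
  else 0

/-- The volume of a norm: the mean of its spectrum, computed in an orthogonal basis. -/
noncomputable def vol (χ : NAnorm k V) : ℝ :=
  if h : ∃ b : Module.Basis (Fin (Module.finrank k V)) k V, χ.IsOrthogonal b then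
    (Module.finrank k V : ℝ)⁻¹ * ∑ j, χ.val (h.choose j)
  else 0

end NAnorm

/-!
A joint orthogonal basis of `χ` and `χ'` exists: split off a vector `v` maximizing `χ`; on every
nonzero coset of `k ∙ v` the norm `χ` is constant, so lifts of a joint orthogonal basis of the
quotient norms can be chosen to realize both quotient norms at once, and together with `v` they
are orthogonal for both norms. Such a basis is also orthogonal for `χ ∧ χ'`. The multiset of
pairs `(χ bⱼ, χ' bⱼ)` does not depend on the joint basis, since it is recovered by
inclusion–exclusion from the dimensions of the subspaces `{χ ≥ s, χ' ≥ t}` and their strict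
variants. In one basis that is orthogonal for all three norms the identity holds termwise: for
each `j` one of `χ bⱼ - min (χ bⱼ) (χ' bⱼ)` and `min (χ bⱼ) (χ' bⱼ) - χ' bⱼ` vanishes.
-/

theorem iInf_fin_succ {α : Type*} [CompleteLattice α] {n : ℕ} (f : Fin (n + 1) → α) :
    ⨅ i, f i = f 0 ⊓ ⨅ j : Fin n, f j.succ :=
  le_antisymm (le_inf (iInf_le f 0) (le_iInf fun j => iInf_le f j.succ))
    (le_iInf fun i => Fin.cases inf_le_left (fun j => inf_le_right.trans (iInf_le _ j)) i)

theorem Multiset.count_add_countP_quadrants {α : Type*} [LinearOrder α] (M : Multiset (α × α))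
    (a c : α) :
    M.count (a, c) + M.countP (fun x => a < x.1 ∧ c ≤ x.2) +
        M.countP (fun x => a ≤ x.1 ∧ c < x.2) =
      M.countP (fun x => a ≤ x.1 ∧ c ≤ x.2) + M.countP (fun x => a < x.1 ∧ c < x.2) := by
  induction M using Multiset.induction_on with
  | empty => simp
  | cons x M ih =>
    simp only [Multiset.count_cons, Multiset.countP_cons]
    split_ifs <;> grind

theorem abs_sub_rpow_eq_add_of_min {p : ℝ} (hp : p ≠ 0) (x y : ℝ) :
    |x - y| ^ p = |x - min x y| ^ p + |min x y - y| ^ p := by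
  rcases le_total x y with h | h
  · rw [min_eq_left h, sub_self, abs_zero, Real.zero_rpow hp, zero_add]
  · rw [min_eq_right h, sub_self, abs_zero, Real.zero_rpow hp, add_zero]

theorem Module.Basis.span_image_inter {ι R M : Type*} [Semiring R] [AddCommMonoid M] [Module R M]
    (b : Module.Basis ι R M) (s t : Set ι) :
    Submodule.span R (b '' (s ∩ t)) = Submodule.span R (b '' s) ⊓ Submodule.span R (b '' t) := by
  ext v
  simp only [Submodule.mem_inf, b.mem_span_image, Set.subset_inter_iff]

theorem Module.Basis.finrank_span_image {ι K M : Type*} [Fintype ι] [DivisionRing K]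
    [AddCommGroup M] [Module K M] (b : Module.Basis ι K M) (p : ι → Prop) [DecidablePred p] :
    Module.finrank K (Submodule.span K (b '' {i | p i})) = (Finset.univ.filter p).card := by
  have := finrank_span_eq_card (b.linearIndependent.comp _ (Subtype.val_injective (p := p)))
  rwa [Set.range_comp, Subtype.range_coe_subtype, Fintype.card_subtype] at this

namespace NAnorm

variable {k V : Type*} [Field k] [AddCommGroup V] [Module k V] (χ χ' : NAnorm k V)

theorem toFun_zero : χ.toFun 0 = ⊤ := (χ.top_iff 0).2 rfl

theorem toFun_ne_top {v : V} (hv : v ≠ 0) : χ.toFun v ≠ ⊤ := fun h => hv ((χ.top_iff v).1 h)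

theorem toFun_neg (v : V) : χ.toFun (-v) = χ.toFun v := by
  simpa using χ.smul_eq (-1) v (by simp)

theorem toFun_add_of_lt {v w : V} (h : χ.toFun v < χ.toFun w) : χ.toFun (v + w) = χ.toFun v := by
  refine le_antisymm ?_ (min_eq_left h.le ▸ χ.ultra v w)
  have := χ.ultra (v + w) (-w)
  rw [add_neg_cancel_right, toFun_neg] at this
  exact (min_le_iff.1 this).resolve_right h.not_ge

theorem toFun_add_of_ne {v w : V} (h : χ.toFun v ≠ χ.toFun w) :
    χ.toFun (v + w) = min (χ.toFun v) (χ.toFun w) := by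
  rcases h.lt_or_gt with h | h
  · rw [χ.toFun_add_of_lt h, min_eq_left h.le]
  · rw [add_comm, χ.toFun_add_of_lt h, min_eq_right h.le]

theorem toFun_add_of_le {v w : V} (h : χ.toFun (v + w) ≤ χ.toFun w) :
    χ.toFun (v + w) = min (χ.toFun v) (χ.toFun w) := by
  rcases lt_or_ge (χ.toFun v) (χ.toFun w) with hlt | hge
  · exact χ.toFun_add_of_ne hlt.ne
  · rw [min_eq_right hge]
    exact le_antisymm h (min_eq_right hge ▸ χ.ultra v w)

theorem iInf_le_toFun_sum {ι : Type*} (s : Finset ι) (g : ι → V) :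
    ⨅ i ∈ s, χ.toFun (g i) ≤ χ.toFun (∑ i ∈ s, g i) := by
  classical
  induction s using Finset.induction_on with
  | empty => simp [toFun_zero]
  | insert a s has ih =>
    rw [Finset.sum_insert has, Finset.iInf_insert]
    exact (inf_le_inf_left _ ih).trans (χ.ultra _ _)

theorem toFun_sum_of_injOn {ι : Type*} (s : Finset ι) (g : ι → V)
    (hg : Set.InjOn (χ.toFun ∘ g) s) : χ.toFun (∑ i ∈ s, g i) = ⨅ i ∈ s, χ.toFun (g i) := by
  classical
  induction s using Finset.induction_on with
  | empty => simp [toFun_zero]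
  | insert a s has ih =>
    rw [Finset.coe_insert] at hg
    have ih := ih (hg.mono (Set.subset_insert _ _))
    rw [Finset.sum_insert has, Finset.iInf_insert, ← ih]
    rcases s.eq_empty_or_nonempty with rfl | hs
    · simp [toFun_zero]
    obtain ⟨i, hi, hmin⟩ := s.exists_min_image (χ.toFun ∘ g) hs
    have hinf : ⨅ j ∈ s, χ.toFun (g j) = χ.toFun (g i) :=
      le_antisymm (iInf₂_le i hi) (le_iInf₂ hmin)
    refine χ.toFun_add_of_ne ?_
    rw [ih, hinf]
    exact fun h => has (hg (Set.mem_insert _ _) (Set.mem_insert_of_mem _ hi) h ▸ hi)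

theorem linearIndependent_of_injective {ι : Type*} {f : ι → V} (h0 : ∀ i, f i ≠ 0)
    (hf : Function.Injective (χ.toFun ∘ f)) : LinearIndependent k f := by
  rw [linearIndependent_iff]
  intro l hl
  ext i
  by_contra hi
  have hinj : Set.InjOn (χ.toFun ∘ fun j => l j • f j) l.support := fun j hj j' hj' h => by
    simp only [Function.comp_apply, χ.smul_eq _ _ (Finsupp.mem_support_iff.1 hj),
      χ.smul_eq _ _ (Finsupp.mem_support_iff.1 hj')] at h
    exact hf h
  have hsum := χ.toFun_sum_of_injOn _ _ hinj
  rw [Finsupp.linearCombination_apply, Finsupp.sum] at hl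
  rw [hl, toFun_zero] at hsum
  have := iInf₂_eq_top.1 hsum.symm i (Finsupp.mem_support_iff.2 hi)
  exact (smul_ne_zero hi (h0 i)) ((χ.top_iff _).1 this)

section FiniteDimensional

variable [FiniteDimensional k V]

theorem finite_range : (Set.range χ.toFun).Finite := by
  refine Set.Finite.of_sdiff (t := {⊤}) ?_ (Set.finite_singleton ⊤)
  by_contra hinf
  obtain ⟨t, hts, hcard⟩ := Set.Infinite.exists_subset_card_eq hinf (Module.finrank k V + 1)
  choose f hf using fun e : t => (hts e.2).1
  have h0 : ∀ e, f e ≠ 0 := fun e h => (hts e.2).2 (by rw [← hf e, h, toFun_zero]; rfl)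
  have hinj : Function.Injective (χ.toFun ∘ f) := fun e e' h =>
    Subtype.ext (by simpa only [Function.comp_apply, hf] using h)
  have := (χ.linearIndependent_of_injective h0 hinj).fintype_card_le_finrank
  simp only [Fintype.card_coe, hcard] at this
  omega

theorem exists_toFun_eq_sSup {S : Set V} (hS : S.Nonempty) :
    ∃ y ∈ S, χ.toFun y = sSup (χ.toFun '' S) :=
  (hS.image _).csSup_mem (χ.finite_range.subset (Set.image_subset_range _ _))

theorem exists_forall_toFun_le [Nontrivial V] : ∃ v ≠ 0, ∀ w ≠ 0, χ.toFun w ≤ χ.toFun v := by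
  obtain ⟨v, hv, hsup⟩ := χ.exists_toFun_eq_sSup (S := {0}ᶜ) (exists_ne 0)
  exact ⟨v, hv, fun w hw => hsup ▸ le_sSup ⟨w, hw, rfl⟩⟩

theorem exists_toFun_eq_sSup_coset (U : Submodule k V) (x : V ⧸ U) :
    ∃ y, Submodule.Quotient.mk y = x ∧
      χ.toFun y = sSup (χ.toFun '' {y | Submodule.Quotient.mk y = x}) :=
  χ.exists_toFun_eq_sSup (Submodule.Quotient.mk_surjective U x)

/-- `χ̄ x = max {χ y | y ↦ x}`: the supremum is attained because `χ` takes finitely many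
values. -/
def quot (U : Submodule k V) : NAnorm k (V ⧸ U) where
  toFun x := sSup (χ.toFun '' {y | Submodule.Quotient.mk y = x})
  ne_bot x := by
    obtain ⟨y, -, hy⟩ := χ.exists_toFun_eq_sSup_coset U x
    exact hy ▸ χ.ne_bot y
  top_iff x := by
    obtain ⟨y, rfl, hy⟩ := χ.exists_toFun_eq_sSup_coset U x
    refine ⟨fun h => ?_, fun hx => top_le_iff.1 (le_sSup ⟨0, by simp [hx], χ.toFun_zero⟩)⟩
    rw [← hy, χ.top_iff] at h
    simp [h]
  smul_eq a x ha := by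
    have key : ∀ (a : k) (x : V ⧸ U), a ≠ 0 →
        sSup (χ.toFun '' {y | Submodule.Quotient.mk y = a • x}) ≤
          sSup (χ.toFun '' {y | Submodule.Quotient.mk y = x}) := by
      refine fun a x ha => sSup_le_sSup_of_isCofinalFor ?_
      rintro _ ⟨y, hy : Submodule.Quotient.mk y = a • x, rfl⟩
      refine ⟨_, ⟨a⁻¹ • y, ?_, rfl⟩, (χ.smul_eq _ _ (inv_ne_zero ha)).ge⟩
      simp [hy, smul_smul, ha]
    refine le_antisymm (key a x ha) ?_
    simpa [smul_smul, ha] using key a⁻¹ (a • x) (inv_ne_zero ha)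
  ultra x x' := by
    obtain ⟨y, rfl, hy⟩ := χ.exists_toFun_eq_sSup_coset U x
    obtain ⟨y', rfl, hy'⟩ := χ.exists_toFun_eq_sSup_coset U x'
    rw [← hy, ← hy']
    exact (χ.ultra y y').trans (le_sSup ⟨y + y', rfl, rfl⟩)

theorem toFun_le_quot (U : Submodule k V) (y : V) :
    χ.toFun y ≤ (χ.quot U).toFun (Submodule.Quotient.mk y) :=
  le_sSup ⟨y, rfl, rfl⟩

theorem exists_toFun_eq_quot (U : Submodule k V) (x : V ⧸ U) :
    ∃ y, Submodule.Quotient.mk y = x ∧ χ.toFun y = (χ.quot U).toFun x :=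
  χ.exists_toFun_eq_sSup_coset U x

end FiniteDimensional

theorem toFun_le_toFun_add_of_mem_span {v : V} (hmax : ∀ w ≠ 0, χ.toFun w ≤ χ.toFun v) {y u : V}
    (hy : y ≠ 0) (hu : u ∈ k ∙ v) : χ.toFun y ≤ χ.toFun (y + u) := by
  obtain ⟨c, rfl⟩ := Submodule.mem_span_singleton.1 hu
  have hcv : χ.toFun y ≤ χ.toFun (c • v) := by
    by_cases hc : c = 0
    · simp [hc, toFun_zero]
    · exact χ.smul_eq c v hc ▸ hmax y hy
  exact (le_min le_rfl hcv).trans (χ.ultra y (c • v))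

/-- `χ` is constant on every nonzero coset of the line through a vector maximizing `χ`. -/
theorem quot_toFun_mk_of_forall_le [FiniteDimensional k V] {v : V}
    (hmax : ∀ w ≠ 0, χ.toFun w ≤ χ.toFun v) {y : V} (hy : y ∉ k ∙ v) :
    (χ.quot (k ∙ v)).toFun (Submodule.Quotient.mk y) = χ.toFun y := by
  obtain ⟨y₀, hy₀, hχy₀⟩ := χ.exists_toFun_eq_quot (k ∙ v) (Submodule.Quotient.mk y)
  have hy₀0 : y₀ ≠ 0 := by
    rintro rfl
    exact hy ((Submodule.Quotient.mk_eq_zero _).1 hy₀.symm)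
  refine le_antisymm ?_ (χ.toFun_le_quot _ y)
  rw [← hχy₀]
  simpa using χ.toFun_le_toFun_add_of_mem_span hmax hy₀0 ((Submodule.Quotient.eq _).1 hy₀.symm)

def IsOrthogonalFamily {ι : Type*} [Fintype ι] (e : ι → V) : Prop :=
  ∀ a : ι → k, χ.toFun (∑ i, a i • e i) = ⨅ i, χ.toFun (a i • e i)

theorem biInf_ne_zero_eq_iInf_smul {ι : Type*} (a : ι → k) (e : ι → V) :
    ⨅ i ∈ {i | a i ≠ 0}, χ.toFun (e i) = ⨅ i, χ.toFun (a i • e i) := by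
  refine iInf_congr fun i => ?_
  by_cases h : a i = 0
  · simp [h, toFun_zero]
  · simp [h, χ.smul_eq _ _ h]

theorem isOrthogonal_iff {N : ℕ} (b : Module.Basis (Fin N) k V) :
    χ.IsOrthogonal b ↔ χ.IsOrthogonalFamily b := by
  simp only [IsOrthogonal, IsOrthogonalFamily, biInf_ne_zero_eq_iInf_smul]

theorem IsOrthogonalFamily.linearIndependent {χ : NAnorm k V} {ι : Type*} [Fintype ι]
    {e : ι → V} (he : χ.IsOrthogonalFamily e) (h0 : ∀ i, e i ≠ 0) : LinearIndependent k e := by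
  rw [Fintype.linearIndependent_iff]
  intro a ha i
  have := iInf_eq_top.1 ((he a).symm.trans (by rw [ha, toFun_zero])) i
  exact (smul_eq_zero.1 ((χ.top_iff _).1 this)).resolve_right (h0 i)

theorem isOrthogonal_inf {χ χ' : NAnorm k V} {N : ℕ} {b : Module.Basis (Fin N) k V}
    (hb : χ.IsOrthogonal b) (hb' : χ'.IsOrthogonal b) : (χ.inf χ').IsOrthogonal b := by
  rw [isOrthogonal_iff] at *
  exact fun a => (congrArg₂ min (hb a) (hb' a)).trans iInf_inf_eq.symm

theorem isOrthogonalFamily_cons [FiniteDimensional k V] {v : V} {n : ℕ}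
    {b : Module.Basis (Fin n) k (V ⧸ k ∙ v)} (hb : (χ.quot (k ∙ v)).IsOrthogonal b)
    {l : Fin n → V} (hl : ∀ j, Submodule.Quotient.mk (l j) = b j)
    (hχl : ∀ j, χ.toFun (l j) = (χ.quot (k ∙ v)).toFun (b j)) :
    χ.IsOrthogonalFamily (Fin.cons v l : Fin (n + 1) → V) := by
  rw [isOrthogonal_iff] at hb
  intro a
  set w := ∑ j, a j.succ • l j
  have hlift : ∀ j, χ.toFun (a j.succ • l j) = (χ.quot (k ∙ v)).toFun (a j.succ • b j) := by
    intro j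
    by_cases h : a j.succ = 0
    · simp [h, toFun_zero]
    · rw [χ.smul_eq _ _ h, (χ.quot _).smul_eq _ _ h, hχl]
  have hmk : ∀ c : k, Submodule.Quotient.mk (c • v + w) = ∑ j, a j.succ • b j := by
    intro c
    rw [Submodule.Quotient.mk_add, Submodule.Quotient.mk_smul,
      (Submodule.Quotient.mk_eq_zero _).2 (Submodule.mem_span_singleton_self v), smul_zero,
      zero_add, ← Submodule.mkQ_apply, map_sum]
    simp [hl]
  have hquot : (χ.quot (k ∙ v)).toFun (∑ j, a j.succ • b j) = ⨅ j, χ.toFun (a j.succ • l j) := by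
    rw [hb, iInf_congr hlift]
  have hw : χ.toFun w = ⨅ j, χ.toFun (a j.succ • l j) := by
    refine le_antisymm ?_ (by simpa using χ.iInf_le_toFun_sum Finset.univ fun j => a j.succ • l j)
    calc χ.toFun w = χ.toFun ((0 : k) • v + w) := by rw [zero_smul, zero_add]
      _ ≤ (χ.quot (k ∙ v)).toFun (Submodule.Quotient.mk ((0 : k) • v + w)) := χ.toFun_le_quot _ _
      _ = ⨅ j, χ.toFun (a j.succ • l j) := by rw [hmk, hquot]
  rw [Fin.sum_univ_succ, iInf_fin_succ]
  simp only [Fin.cons_zero, Fin.cons_succ]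
  rw [← hw]
  refine χ.toFun_add_of_le ?_
  rw [hw, ← hquot, ← hmk (a 0)]
  exact χ.toFun_le_quot _ _

theorem exists_isOrthogonal_isOrthogonal [FiniteDimensional k V] :
    ∃ b : Module.Basis (Fin (Module.finrank k V)) k V, χ.IsOrthogonal b ∧ χ'.IsOrthogonal b := by
  induction hn : Module.finrank k V generalizing V with
  | zero =>
    have := Module.finrank_zero_iff.1 hn
    refine ⟨Module.Basis.empty V, ?_, ?_⟩ <;> intro a <;> simp [toFun_zero, iInf_of_empty]
  | succ n ih =>
    have : Nontrivial V := Module.finrank_pos_iff.1 (by rw [hn]; exact n.succ_pos)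
    obtain ⟨v, hv, hmax⟩ := χ.exists_forall_toFun_le
    have hquot : Module.finrank k (V ⧸ k ∙ v) = n := by
      have := (k ∙ v).finrank_quotient_add_finrank
      rw [finrank_span_singleton hv] at this
      omega
    obtain ⟨b, hb, hb'⟩ := ih (χ.quot (k ∙ v)) (χ'.quot (k ∙ v)) hquot
    choose l hl hχ'l using fun j => χ'.exists_toFun_eq_quot (k ∙ v) (b j)
    have hl0 : ∀ j, l j ∉ k ∙ v := fun j h =>
      b.ne_zero j (by rw [← hl j, Submodule.Quotient.mk_eq_zero]; exact h)
    have hχl : ∀ j, χ.toFun (l j) = (χ.quot (k ∙ v)).toFun (b j) := fun j => by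
      rw [← hl j, χ.quot_toFun_mk_of_forall_le hmax (hl0 j)]
    have hχ := χ.isOrthogonalFamily_cons hb hl hχl
    have hne : ∀ i, (Fin.cons v l : Fin (n + 1) → V) i ≠ 0 := Fin.cases hv fun j h =>
      hl0 j (by rw [Fin.cons_succ] at h; exact h ▸ Submodule.zero_mem _)
    let e := basisOfLinearIndependentOfCardEqFinrank (hχ.linearIndependent hne) (by simp [hn])
    refine ⟨e, ?_, ?_⟩
    all_goals
      rw [isOrthogonal_iff, coe_basisOfLinearIndependentOfCardEqFinrank]
    · exact hχ
    · exact χ'.isOrthogonalFamily_cons hb' hl hχ'l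

def superlevel (P : Set EReal) (hP : IsUpperSet P) (htop : ⊤ ∈ P) : Submodule k V where
  carrier := {v | χ.toFun v ∈ P}
  add_mem' {v w} hv hw := hP (χ.ultra v w) (min_rec' (· ∈ P) hv hw)
  zero_mem' := by simpa [toFun_zero] using htop
  smul_mem' c v hv := by
    by_cases hc : c = 0
    · simpa [hc, toFun_zero] using htop
    · change χ.toFun (c • v) ∈ P
      rwa [χ.smul_eq c v hc]

theorem superlevel_eq_span {N : ℕ} {b : Module.Basis (Fin N) k V} (hb : χ.IsOrthogonal b)
    (P : Set EReal) (hP : IsUpperSet P) (htop : ⊤ ∈ P) :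
    χ.superlevel P hP htop = Submodule.span k (b '' {j | χ.toFun (b j) ∈ P}) := by
  rw [isOrthogonal_iff] at hb
  ext v
  have hv : χ.toFun v = Finset.univ.inf fun j => χ.toFun (b.repr v j • b j) := by
    rw [Finset.inf_univ_eq_iInf, ← hb, b.sum_repr]
  have hsmul : ∀ j, χ.toFun (b.repr v j • b j) ∈ P ↔ (b.repr v j ≠ 0 → χ.toFun (b j) ∈ P) := by
    intro j
    by_cases h : b.repr v j = 0
    · simp [h, toFun_zero, htop]
    · simp [h, χ.smul_eq _ _ h]
  rw [b.mem_span_image]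
  change χ.toFun v ∈ P ↔ _
  constructor
  · intro h j hj
    exact (hsmul j).1 (hP (hv ▸ Finset.inf_le (Finset.mem_univ j)) h) (Finsupp.mem_support_iff.1 hj)
  · intro h
    rw [hv]
    refine Finset.inf_mem P htop (fun x hx y hy => min_rec' (· ∈ P) hx hy) _ _ fun j _ =>
      (hsmul j).2 fun hj => h (Finsupp.mem_support_iff.2 hj)

def jointSpectrum {N : ℕ} (b : Module.Basis (Fin N) k V) : Multiset (EReal × EReal) :=
  Finset.univ.val.map fun j => (χ.toFun (b j), χ'.toFun (b j))

theorem ne_top_of_mem_jointSpectrum {N : ℕ} {b : Module.Basis (Fin N) k V} {x : EReal × EReal}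
    (hx : x ∈ jointSpectrum χ χ' b) : x.1 ≠ ⊤ ∧ x.2 ≠ ⊤ := by
  obtain ⟨j, -, rfl⟩ := Multiset.mem_map.1 hx
  exact ⟨χ.toFun_ne_top (b.ne_zero j), χ'.toFun_ne_top (b.ne_zero j)⟩

theorem countP_jointSpectrum {χ χ' : NAnorm k V} {N : ℕ} {b : Module.Basis (Fin N) k V}
    (hb : χ.IsOrthogonal b) (hb' : χ'.IsOrthogonal b) {P Q : Set EReal} (hP : IsUpperSet P)
    (hQ : IsUpperSet Q) (hPtop : ⊤ ∈ P) (hQtop : ⊤ ∈ Q) :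
    (jointSpectrum χ χ' b).countP (fun x => x.1 ∈ P ∧ x.2 ∈ Q) =
      Module.finrank k ↥(χ.superlevel P hP hPtop ⊓ χ'.superlevel Q hQ hQtop) := by
  rw [χ.superlevel_eq_span hb, χ'.superlevel_eq_span hb', ← b.span_image_inter, ← Set.ofPred_and,
    b.finrank_span_image, jointSpectrum, Multiset.countP_map]
  rfl

theorem jointSpectrum_eq {χ χ' : NAnorm k V} {N : ℕ} {b c : Module.Basis (Fin N) k V}
    (hb : χ.IsOrthogonal b) (hb' : χ'.IsOrthogonal b) (hc : χ.IsOrthogonal c)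
    (hc' : χ'.IsOrthogonal c) : jointSpectrum χ χ' b = jointSpectrum χ χ' c := by
  have hcount : ∀ {P Q : Set EReal} (hP : IsUpperSet P) (hQ : IsUpperSet Q) (hPtop : ⊤ ∈ P)
      (hQtop : ⊤ ∈ Q), (jointSpectrum χ χ' b).countP (fun x => x.1 ∈ P ∧ x.2 ∈ Q) =
        (jointSpectrum χ χ' c).countP (fun x => x.1 ∈ P ∧ x.2 ∈ Q) := fun hP hQ hPtop hQtop => by
    rw [countP_jointSpectrum hb hb' hP hQ hPtop hQtop,
      countP_jointSpectrum hc hc' hP hQ hPtop hQtop]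
  refine Multiset.ext.2 fun ⟨s, t⟩ => ?_
  by_cases htop : s = ⊤ ∨ t = ⊤
  · have hnot : ∀ d : Module.Basis (Fin N) k V, (s, t) ∉ jointSpectrum χ χ' d := fun d h => by
      have := ne_top_of_mem_jointSpectrum χ χ' h
      tauto
    rw [Multiset.count_eq_zero.2 (hnot b), Multiset.count_eq_zero.2 (hnot c)]
  rw [not_or] at htop
  have hs : ⊤ ∈ Set.Ioi s := lt_top_iff_ne_top.2 htop.1
  have ht : ⊤ ∈ Set.Ioi t := lt_top_iff_ne_top.2 htop.2
  have hs₀ : ⊤ ∈ Set.Ici s := Set.mem_Ici.2 le_top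
  have ht₀ : ⊤ ∈ Set.Ici t := Set.mem_Ici.2 le_top
  have hA := hcount (isUpperSet_Ici s) (isUpperSet_Ici t) hs₀ ht₀
  have hB := hcount (isUpperSet_Ioi s) (isUpperSet_Ici t) hs ht₀
  have hC := hcount (isUpperSet_Ici s) (isUpperSet_Ioi t) hs₀ ht
  have hD := hcount (isUpperSet_Ioi s) (isUpperSet_Ioi t) hs ht
  simp only [Set.mem_Ici, Set.mem_Ioi] at hA hB hC hD
  have := (jointSpectrum χ χ' b).count_add_countP_quadrants s t
  have := (jointSpectrum χ χ' c).count_add_countP_quadrants s t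
  omega

theorem sum_eq_of_isOrthogonal {χ χ' : NAnorm k V} {N : ℕ} {b c : Module.Basis (Fin N) k V}
    (hb : χ.IsOrthogonal b) (hb' : χ'.IsOrthogonal b) (hc : χ.IsOrthogonal c)
    (hc' : χ'.IsOrthogonal c) {β : Type*} [AddCommMonoid β] (g : EReal × EReal → β) :
    ∑ j, g (χ.toFun (b j), χ'.toFun (b j)) = ∑ j, g (χ.toFun (c j), χ'.toFun (c j)) := by
  have := congrArg (fun M => (M.map g).sum) (jointSpectrum_eq hb hb' hc hc')
  simpa only [jointSpectrum, Multiset.map_map, Function.comp_def, Finset.sum_map_val] using this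

theorem dp_rpow_eq [FiniteDimensional k V] {p : ℝ} (hp : p ≠ 0)
    {b : Module.Basis (Fin (Module.finrank k V)) k V} (hb : χ.IsOrthogonal b)
    (hb' : χ'.IsOrthogonal b) :
    dp p χ χ' ^ p = (Module.finrank k V : ℝ)⁻¹ * ∑ j, |χ.val (b j) - χ'.val (b j)| ^ p := by
  have h : ∃ b : Module.Basis (Fin (Module.finrank k V)) k V,
      χ.IsOrthogonal b ∧ χ'.IsOrthogonal b := ⟨b, hb, hb'⟩
  have hsum : ∑ j, |χ.val (h.choose j) - χ'.val (h.choose j)| ^ p =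
      ∑ j, |χ.val (b j) - χ'.val (b j)| ^ p :=
    sum_eq_of_isOrthogonal h.choose_spec.1 h.choose_spec.2 hb hb'
      fun x => |x.1.toReal - x.2.toReal| ^ p
  rw [dp, dif_pos h, hsum, ← Real.rpow_mul (by positivity), one_div_mul_cancel hp, Real.rpow_one]

theorem val_inf (v : V) : (χ.inf χ').val v = min (χ.val v) (χ'.val v) := by
  by_cases hv : v = 0
  · simp [val, hv, toFun_zero]
  change (min (χ.toFun v) (χ'.toFun v)).toReal = min (χ.toFun v).toReal (χ'.toFun v).toReal
  rcases le_total (χ.toFun v) (χ'.toFun v) with h | h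
  · rw [min_eq_left h, min_eq_left (EReal.toReal_le_toReal h (χ.ne_bot v) (χ'.toFun_ne_top hv))]
  · rw [min_eq_right h, min_eq_right (EReal.toReal_le_toReal h (χ'.ne_bot v) (χ.toFun_ne_top hv))]

end NAnorm

/-- Pythagorean identity for the `d_p` distances:
`d_p(χ,χ')^p = d_p(χ, χ∧χ')^p + d_p(χ∧χ', χ')^p` for every `p ∈ [1,∞)`. -/
theorem dp_pythagoras {k V : Type*} [Field k] [AddCommGroup V] [Module k V]
    [FiniteDimensional k V] (p : ℝ) (hp : 1 ≤ p) (χ χ' : NAnorm k V) :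
    NAnorm.dp p χ χ' ^ p =
      NAnorm.dp p χ (χ.inf χ') ^ p + NAnorm.dp p (χ.inf χ') χ' ^ p := by
  have hp0 : p ≠ 0 := (zero_lt_one.trans_le hp).ne'
  obtain ⟨b, hb, hb'⟩ := χ.exists_isOrthogonal_isOrthogonal χ'
  have hinf := NAnorm.isOrthogonal_inf hb hb'
  rw [NAnorm.dp_rpow_eq χ χ' hp0 hb hb', NAnorm.dp_rpow_eq χ _ hp0 hb hinf,
    NAnorm.dp_rpow_eq _ χ' hp0 hinf hb', ← mul_add, ← Finset.sum_add_distrib]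
  congr 1
  refine Finset.sum_congr rfl fun j _ => ?_
  rw [NAnorm.val_inf]
  exact abs_sub_rpow_eq_add_of_min hp0 _ _
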